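/- arXiv:1908.00131 — 2 statements merged into one kernel-verified Lean document; each statement's English description precedes it below -/
import Mathlib

section
/- Under the hypotheses of the boundedness lemma for Proximal AL with in addition c₁ = β/4 − C₁/ρ > 0 and c₂ = β/4 − C₂/ρ > 0, the Lyapunov values are uniformly bounded: P_{k+1} ≤ P₁ + 1 for every k ≥ 1, where P_k = L_ρ(x_k, λ_k) + (β/4)‖x_k − x_{k−1}‖²; and consequently the subproblem objective values satisfy ψ_k(x_k) = L_ρ(x_k, λ_k) ≤ α̂ − 1 for every k ≥ 0, where ψ_k(x) = L_ρ(x, λ_k) + (β/2)‖x − x_k‖². -/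
/-!
Along the iteration the Lyapunov value `P_k` can only grow by an error `e_k` made of residuals.
Subtracting the stationarity conditions of two consecutive subproblems expresses
`∇c(x_{k+1})(λ_{k+1} - λ_k)` through residuals, steps and the change of `∇f` and `∇c`; the
nondegeneracy `σ‖v‖ ≤ ‖∇c v‖` turns this into a bound on `‖λ_{k+1} - λ_k‖`, and the dual ascent term
`‖λ_{k+1} - λ_k‖² / ρ` of `P` is then absorbed by the proximal decrease as soon as `c₁, c₂ > 0`.
The choice of `ρ` makes `∑ e_k ≤ 1`.

The constants `M_f, L_f, …` are only valid on the sublevel set `S⁰_α̂`, so the bound is proved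
together with `x_k ∈ S⁰_α̂` by induction: when two consecutive iterates lie in `S⁰_α̂`,
nondegeneracy bounds the multiplier, `‖λ_k‖² ≤ 2(ρ - ρ₀)`, and Young's inequality gives
`f + (ρ₀/2)‖c‖² ≤ L_ρ(·, λ_k) + ‖λ_k‖² / (2(ρ - ρ₀)) ≤ (α̂ - 1) + 1` at the next iterate,
since there `L_ρ(·, λ_k) ≤ P_k ≤ α̂ - 1`.
-/

open Filter Topology

noncomputable def AL {n m : ℕ} (f : EuclideanSpace ℝ (Fin n) → ℝ)
    (c : EuclideanSpace ℝ (Fin n) → EuclideanSpace ℝ (Fin m)) (ρ : ℝ)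
    (x : EuclideanSpace ℝ (Fin n)) (lam : EuclideanSpace ℝ (Fin m)) : ℝ :=
  f x + (inner ℝ lam (c x) : ℝ) + ρ / 2 * ‖c x‖ ^ 2

noncomputable def gradc {n m : ℕ}
    (c : EuclideanSpace ℝ (Fin n) → EuclideanSpace ℝ (Fin m))
    (x : EuclideanSpace ℝ (Fin n)) :
    EuclideanSpace ℝ (Fin m) →L[ℝ] EuclideanSpace ℝ (Fin n) :=
  ContinuousLinearMap.adjoint (fderiv ℝ c x)

noncomputable def hess {n : ℕ} (g : EuclideanSpace ℝ (Fin n) → ℝ)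
    (x d : EuclideanSpace ℝ (Fin n)) : ℝ :=
  iteratedFDeriv ℝ 2 g x ![d, d]

open Finset

lemma sq_le_of_le_add_add {l s q₁ q₂ : ℝ} (hl : 0 ≤ l) (h : l ≤ s + q₁ + q₂) :
    l ^ 2 ≤ 2 * s ^ 2 + 4 * q₁ ^ 2 + 4 * q₂ ^ 2 := by
  nlinarith [mul_le_mul h h hl (hl.trans h), sq_nonneg (s - q₁ - q₂), sq_nonneg (q₁ - q₂)]

lemma mul_sub_half_mul_sq_le {a b s : ℝ} (hs : 0 < s) : a * b - s / 2 * b ^ 2 ≤ a ^ 2 / (2 * s) := by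
  rw [le_div_iff₀ (by positivity)]
  nlinarith [sq_nonneg (a - s * b)]

lemma sum_range_sq_add_mul_le {a : ℕ → ℝ} {γ R : ℝ} (hγ : 0 ≤ γ)
    (ha : ∀ K, ∑ k ∈ range K, a k ^ 2 ≤ R) (K : ℕ) :
    ∑ k ∈ range K, (a (k + 1) + γ * a k) ^ 2 ≤ (1 + γ) ^ 2 * R := by
  have hshift : ∑ k ∈ range K, a (k + 1) ^ 2 ≤ R := by
    have := ha (K + 1)
    rw [sum_range_succ'] at this
    linarith [sq_nonneg (a 0)]
  calc ∑ k ∈ range K, (a (k + 1) + γ * a k) ^ 2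
      ≤ ∑ k ∈ range K, (1 + γ) * (a (k + 1) ^ 2 + γ * a k ^ 2) :=
        sum_le_sum fun k _ => by nlinarith [mul_nonneg hγ (sq_nonneg (a (k + 1) - a k))]
    _ = (1 + γ) * (∑ k ∈ range K, a (k + 1) ^ 2 + γ * ∑ k ∈ range K, a k ^ 2) := by
        rw [← mul_sum, sum_add_distrib, ← mul_sum]
    _ ≤ (1 + γ) * (R + γ * R) := by gcongr; exact ha K
    _ = (1 + γ) ^ 2 * R := by ring

lemma mem_and_le_add_sum_of_step {P e : ℕ → ℝ} {M : ℕ → Prop} {a : ℝ} (hM₀ : M 0) (hM₁ : M 1)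
    (hP₀ : P 0 + 1 ≤ a) (he : ∀ K, ∑ k ∈ range K, e k ≤ 1)
    (hstep : ∀ k, M k → M (k + 1) → P k ≤ a → M (k + 2) ∧ P (k + 1) ≤ P k + e k) (K : ℕ) :
    M K ∧ M (K + 1) ∧ P K ≤ P 0 + ∑ k ∈ range K, e k := by
  induction K with
  | zero => simp [hM₀, hM₁]
  | succ K ih =>
    obtain ⟨hK, hK₁, hPK⟩ := ih
    obtain ⟨hK₂, hPK₁⟩ := hstep K hK hK₁ (by linarith [he K])
    exact ⟨hK₁, hK₂, by rw [sum_range_succ]; linarith⟩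

lemma bddBelow_range_of_isCompact_sublevels {X : Type*} [TopologicalSpace X] {g : X → ℝ}
    (hg : Continuous g) (hK : ∀ a : ℝ, {y | g y ≤ a} = ∅ ∨ IsCompact {y | g y ≤ a}) :
    BddBelow (Set.range g) := by
  rcases isEmpty_or_nonempty X with hX | ⟨⟨y₀⟩⟩
  · simp [Set.range_eq_empty]
  have hne : {y | g y ≤ g y₀}.Nonempty := ⟨y₀, le_refl (g y₀)⟩
  obtain ⟨z, -, hz⟩ :=
    ((hK (g y₀)).resolve_left hne.ne_empty).exists_isMinOn hne hg.continuousOn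
  refine ⟨g z, ?_⟩
  rintro _ ⟨y, rfl⟩
  by_cases hy : g y ≤ g y₀
  · exact hz hy
  · exact (hz hne.some_mem).trans (hne.some_mem.trans (le_of_not_ge hy))

lemma norm_gradc_apply_sub_le {n m : ℕ}
    (c : EuclideanSpace ℝ (Fin n) → EuclideanSpace ℝ (Fin m))
    (a b : EuclideanSpace ℝ (Fin n)) (v : EuclideanSpace ℝ (Fin m)) :
    ‖gradc c a v - gradc c b v‖ ≤ ‖fderiv ℝ c a - fderiv ℝ c b‖ * ‖v‖ := by
  have h : gradc c a v - gradc c b v = ContinuousLinearMap.adjoint (fderiv ℝ c a - fderiv ℝ c b) v := by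
    simp [gradc, map_sub]
  rw [h, ← ContinuousLinearMap.adjoint.norm_map (fderiv ℝ c a - fderiv ℝ c b)]
  exact ContinuousLinearMap.le_opNorm _ _

section AugmentedLagrangian

variable {n m : ℕ} (f : EuclideanSpace ℝ (Fin n) → ℝ)
  (c : EuclideanSpace ℝ (Fin n) → EuclideanSpace ℝ (Fin m)) (ρ : ℝ)
  (y : EuclideanSpace ℝ (Fin n)) (l : EuclideanSpace ℝ (Fin m))

lemma AL_add_smul (t : ℝ) : AL f c ρ y (l + t • c y) = AL f c ρ y l + t * ‖c y‖ ^ 2 := by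
  simp only [AL, inner_add_left, real_inner_smul_left, real_inner_self_eq_norm_sq]
  ring

lemma AL_le : AL f c ρ y l ≤ f y + ‖l‖ ^ 2 / 2 + (1 + ρ) / 2 * ‖c y‖ ^ 2 := by
  have := real_inner_le_norm l (c y)
  unfold AL
  nlinarith [sq_nonneg (‖l‖ - ‖c y‖)]

variable {f c ρ y l}

lemma le_AL_add_div {ρ₀ : ℝ} (hρ₀ : ρ₀ < ρ) :
    f y + ρ₀ / 2 * ‖c y‖ ^ 2 ≤ AL f c ρ y l + ‖l‖ ^ 2 / (2 * (ρ - ρ₀)) := by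
  have := neg_le_of_abs_le (abs_real_inner_le_norm l (c y))
  have := mul_sub_half_mul_sq_le (a := ‖l‖) (b := ‖c y‖) (sub_pos.mpr hρ₀)
  unfold AL
  linarith

lemma mul_norm_sq_le_AL {ρ₀ L : ℝ} (hρ : 1 ≤ ρ) (hρ₀ : 3 * ρ₀ ≤ ρ)
    (hL : L ≤ f y + ρ₀ / 2 * ‖c y‖ ^ 2) :
    ρ * ‖c y‖ ^ 2 ≤ 6 * (AL f c ρ y l - L) + 9 * ‖l‖ ^ 2 := by
  have := neg_le_of_abs_le (abs_real_inner_le_norm l (c y))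
  unfold AL
  nlinarith [sq_nonneg (‖c y‖ - 3 * ‖l‖),
    mul_nonneg (by linarith : (0 : ℝ) ≤ 2 * ρ - 3 * ρ₀ - 1) (sq_nonneg ‖c y‖)]

lemma le_of_AL_le {ρ₀ α : ℝ} (hρ₀ : ρ₀ < ρ) (hl : ‖l‖ ^ 2 ≤ 2 * (ρ - ρ₀))
    (h : AL f c ρ y l ≤ α - 1) : f y + ρ₀ / 2 * ‖c y‖ ^ 2 ≤ α := by
  have := le_AL_add_div (f := f) (c := c) (y := y) (l := l) hρ₀
  have : ‖l‖ ^ 2 / (2 * (ρ - ρ₀)) ≤ 1 := by rw [div_le_one (by linarith)]; exact hl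
  linarith

end AugmentedLagrangian

structure IsProximalALSeq {n m : ℕ} (f : EuclideanSpace ℝ (Fin n) → ℝ)
    (c : EuclideanSpace ℝ (Fin n) → EuclideanSpace ℝ (Fin m)) (ρ β : ℝ)
    (x : ℕ → EuclideanSpace ℝ (Fin n)) (lam : ℕ → EuclideanSpace ℝ (Fin m))
    (r : ℕ → EuclideanSpace ℝ (Fin n)) : Prop where
  stationary : ∀ k, gradient f (x (k + 1)) + gradc c (x (k + 1)) (lam k)
    + ρ • gradc c (x (k + 1)) (c (x (k + 1))) + β • (x (k + 1) - x k) = r (k + 1)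
  descent : ∀ k,
    AL f c ρ (x (k + 1)) (lam k) + β / 2 * ‖x (k + 1) - x k‖ ^ 2 ≤ AL f c ρ (x k) (lam k)
  multiplier_update : ∀ k, lam (k + 1) = lam k + ρ • c (x (k + 1))

structure SmoothNondegenerateOn {n m : ℕ} (f : EuclideanSpace ℝ (Fin n) → ℝ)
    (c : EuclideanSpace ℝ (Fin n) → EuclideanSpace ℝ (Fin m)) (S : Set (EuclideanSpace ℝ (Fin n)))
    (Mf Lf Mc σ Lc : ℝ) : Prop where
  norm_gradient_le : ∀ y ∈ S, ‖gradient f y‖ ≤ Mf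
  gradient_lipschitz : ∀ y ∈ S, ∀ z ∈ S, ‖gradient f y - gradient f z‖ ≤ Lf * ‖y - z‖
  norm_fderiv_le : ∀ y ∈ S, ‖fderiv ℝ c y‖ ≤ Mc
  mul_norm_le_norm_gradc : ∀ y ∈ S, ∀ v, σ * ‖v‖ ≤ ‖gradc c y v‖
  fderiv_lipschitz : ∀ y ∈ S, ∀ z ∈ S, ‖fderiv ℝ c y - fderiv ℝ c z‖ ≤ Lc * ‖y - z‖

/-- `lyapunov f c ρ β x lam k` is the paper's `P_{k+1}`. -/
noncomputable def lyapunov {n m : ℕ} (f : EuclideanSpace ℝ (Fin n) → ℝ)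
    (c : EuclideanSpace ℝ (Fin n) → EuclideanSpace ℝ (Fin m)) (ρ β : ℝ)
    (x : ℕ → EuclideanSpace ℝ (Fin n)) (lam : ℕ → EuclideanSpace ℝ (Fin m)) (k : ℕ) : ℝ :=
  AL f c ρ (x (k + 1)) (lam (k + 1)) + β / 4 * ‖x (k + 1) - x k‖ ^ 2

lemma AL_le_lyapunov {n m : ℕ} (f : EuclideanSpace ℝ (Fin n) → ℝ)
    (c : EuclideanSpace ℝ (Fin n) → EuclideanSpace ℝ (Fin m)) (ρ : ℝ) {β : ℝ}
    (x : ℕ → EuclideanSpace ℝ (Fin n)) (lam : ℕ → EuclideanSpace ℝ (Fin m)) (hβ : 0 ≤ β) (k : ℕ) :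
    AL f c ρ (x (k + 1)) (lam (k + 1)) ≤ lyapunov f c ρ β x lam k :=
  le_add_of_nonneg_right (by positivity)

noncomputable def residualError {E : Type*} [Norm E] (ρ σ Mc : ℝ) (r : ℕ → E) (k : ℕ) : ℝ :=
  2 * (‖r (k + 2)‖ + (1 + 2 * Mc / σ) * ‖r (k + 1)‖) ^ 2 / (ρ * σ ^ 2)

lemma sum_residualError_le_one {E : Type*} [Norm E] {ρ σ Mc R : ℝ} {r : ℕ → E} (hσ : 0 < σ)
    (hMc : 0 ≤ Mc) (hρ : 0 < ρ) (hR : ∀ K, ∑ k ∈ range K, ‖r (k + 1)‖ ^ 2 ≤ R)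
    (hρR : 16 * (Mc ^ 2 + σ ^ 2) * R / σ ^ 4 ≤ ρ) (K : ℕ) :
    ∑ k ∈ range K, residualError ρ σ Mc r k ≤ 1 := by
  have hR₀ : 0 ≤ R := by simpa using hR 0
  have hsum := sum_range_sq_add_mul_le (a := fun k => ‖r (k + 1)‖)
    (by positivity : 0 ≤ 1 + 2 * Mc / σ) hR K
  rw [div_le_iff₀ (by positivity)] at hρR
  have hscale : (1 + (1 + 2 * Mc / σ)) ^ 2 * σ ^ 2 = 4 * (σ + Mc) ^ 2 := by field_simp; ring
  have key : 2 * ((1 + (1 + 2 * Mc / σ)) ^ 2 * R) * σ ^ 2 ≤ ρ * σ ^ 2 * σ ^ 2 := by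
    nlinarith [mul_nonneg hR₀ (sq_nonneg (Mc - σ))]
  simp only [residualError, ← sum_div, ← mul_sum]
  rw [div_le_one (by positivity)]
  nlinarith [le_of_mul_le_mul_right key (by positivity)]

namespace IsProximalALSeq

variable {n m : ℕ} {f : EuclideanSpace ℝ (Fin n) → ℝ}
  {c : EuclideanSpace ℝ (Fin n) → EuclideanSpace ℝ (Fin m)} {ρ β : ℝ}
  {x : ℕ → EuclideanSpace ℝ (Fin n)} {lam : ℕ → EuclideanSpace ℝ (Fin m)}
  {r : ℕ → EuclideanSpace ℝ (Fin n)}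
  {S : Set (EuclideanSpace ℝ (Fin n))} {Mf Lf Mc σ Lc : ℝ}

lemma AL_succ (h : IsProximalALSeq f c ρ β x lam r) (k : ℕ) :
    AL f c ρ (x (k + 1)) (lam (k + 1)) = AL f c ρ (x (k + 1)) (lam k) + ρ * ‖c (x (k + 1))‖ ^ 2 := by
  rw [h.multiplier_update k, AL_add_smul]

lemma norm_multiplier_sub (h : IsProximalALSeq f c ρ β x lam r) (hρ : 0 ≤ ρ) (k : ℕ) :
    ‖lam (k + 1) - lam k‖ = ρ * ‖c (x (k + 1))‖ := by
  rw [h.multiplier_update k, add_sub_cancel_left, norm_smul, Real.norm_of_nonneg hρ]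

lemma AL_succ_eq_add_div (h : IsProximalALSeq f c ρ β x lam r) (hρ : 0 < ρ) (k : ℕ) :
    AL f c ρ (x (k + 1)) (lam (k + 1))
      = AL f c ρ (x (k + 1)) (lam k) + ‖lam (k + 1) - lam k‖ ^ 2 / ρ := by
  rw [h.AL_succ, h.norm_multiplier_sub hρ.le]
  field_simp

lemma gradc_multiplier (h : IsProximalALSeq f c ρ β x lam r) (k : ℕ) :
    gradc c (x (k + 1)) (lam (k + 1))
      = r (k + 1) - gradient f (x (k + 1)) - β • (x (k + 1) - x k) := by
  rw [h.multiplier_update k, map_add, map_smul, ← h.stationary k]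
  abel

lemma mul_norm_multiplier_le (h : IsProximalALSeq f c ρ β x lam r) (hβ : 0 ≤ β) {k : ℕ}
    (hσ : ∀ v, σ * ‖v‖ ≤ ‖gradc c (x (k + 1)) v‖) :
    σ * ‖lam (k + 1)‖
      ≤ ‖r (k + 1)‖ + ‖gradient f (x (k + 1))‖ + β * ‖x (k + 1) - x k‖ := by
  calc σ * ‖lam (k + 1)‖
      ≤ ‖r (k + 1) - gradient f (x (k + 1)) - β • (x (k + 1) - x k)‖ :=
        h.gradc_multiplier k ▸ hσ _
    _ ≤ ‖r (k + 1)‖ + ‖gradient f (x (k + 1))‖ + ‖β • (x (k + 1) - x k)‖ :=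
        (norm_sub_le _ _).trans (add_le_add_left (norm_sub_le _ _) _)
    _ = _ := by rw [norm_smul, Real.norm_of_nonneg hβ]

lemma gradc_multiplier_sub (h : IsProximalALSeq f c ρ β x lam r) (k : ℕ) :
    gradc c (x (k + 2)) (lam (k + 2) - lam (k + 1))
      = (r (k + 2) - r (k + 1)) - (gradient f (x (k + 2)) - gradient f (x (k + 1)))
        - (β • (x (k + 2) - x (k + 1)) - β • (x (k + 1) - x k))
        - (gradc c (x (k + 2)) (lam (k + 1)) - gradc c (x (k + 1)) (lam (k + 1))) := by
  rw [map_sub, h.gradc_multiplier (k + 1), h.gradc_multiplier k]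
  abel

lemma mul_norm_multiplier_sub_le (h : IsProximalALSeq f c ρ β x lam r)
    (hreg : SmoothNondegenerateOn f c S Mf Lf Mc σ Lc) (hσ : 0 < σ) (hβ : 0 ≤ β) {k : ℕ}
    (hx₁ : x (k + 1) ∈ S) (hx₂ : x (k + 2) ∈ S) :
    σ * ‖lam (k + 2) - lam (k + 1)‖
      ≤ (‖r (k + 2)‖ + (1 + 2 * Mc / σ) * ‖r (k + 1)‖)
        + (Lf + Lc * Mf / σ + β) * ‖x (k + 2) - x (k + 1)‖
        + (β + 2 * Mc * β / σ) * ‖x (k + 1) - x k‖ := by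
  set J := ‖fderiv ℝ c (x (k + 2)) - fderiv ℝ c (x (k + 1))‖
  have hJ : J ≤ 2 * Mc := (norm_sub_le _ _).trans (by
    linarith [hreg.norm_fderiv_le _ hx₁, hreg.norm_fderiv_le _ hx₂])
  have hJL : J ≤ Lc * ‖x (k + 2) - x (k + 1)‖ := hreg.fderiv_lipschitz _ hx₂ _ hx₁
  have hMf := hreg.norm_gradient_le _ hx₁
  have hlam := h.mul_norm_multiplier_le hβ (hreg.mul_norm_le_norm_gradc _ hx₁)
  have hE : σ * ‖gradc c (x (k + 2)) (lam (k + 1)) - gradc c (x (k + 1)) (lam (k + 1))‖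
      ≤ 2 * Mc * ‖r (k + 1)‖ + Lc * ‖x (k + 2) - x (k + 1)‖ * Mf
        + 2 * Mc * (β * ‖x (k + 1) - x k‖) := by
    have hJ₀ : 0 ≤ J := norm_nonneg _
    calc _ ≤ σ * (J * ‖lam (k + 1)‖) := by gcongr; exact norm_gradc_apply_sub_le _ _ _ _
      _ = J * (σ * ‖lam (k + 1)‖) := by ring
      _ ≤ J * (‖r (k + 1)‖ + Mf + β * ‖x (k + 1) - x k‖) := by gcongr; linarith
      _ ≤ _ := by
        rw [mul_add, mul_add]
        gcongr
        · exact (norm_nonneg _).trans hMf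
  have hdiff : σ * ‖lam (k + 2) - lam (k + 1)‖
      ≤ ‖r (k + 2)‖ + ‖r (k + 1)‖ + Lf * ‖x (k + 2) - x (k + 1)‖
        + β * ‖x (k + 2) - x (k + 1)‖ + β * ‖x (k + 1) - x k‖
        + ‖gradc c (x (k + 2)) (lam (k + 1)) - gradc c (x (k + 1)) (lam (k + 1))‖ := by
    refine (hreg.mul_norm_le_norm_gradc _ hx₂ _).trans ?_
    rw [h.gradc_multiplier_sub k]
    have hr := norm_sub_le (r (k + 2)) (r (k + 1))
    have hf := hreg.gradient_lipschitz _ hx₂ _ hx₁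
    have hβx := norm_sub_le (β • (x (k + 2) - x (k + 1))) (β • (x (k + 1) - x k))
    rw [norm_smul, norm_smul, Real.norm_of_nonneg hβ] at hβx
    have h₄ (a b c d : EuclideanSpace ℝ (Fin n)) : ‖a - b - c - d‖ ≤ ‖a‖ + ‖b‖ + ‖c‖ + ‖d‖ := by
      linarith [norm_sub_le (a - b - c) d, norm_sub_le (a - b) c, norm_sub_le a b]
    refine (h₄ _ _ _ _).trans ?_
    linarith
  refine le_of_mul_le_mul_left ?_ hσ
  have expand : σ * ((‖r (k + 2)‖ + (1 + 2 * Mc / σ) * ‖r (k + 1)‖)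
        + (Lf + Lc * Mf / σ + β) * ‖x (k + 2) - x (k + 1)‖
        + (β + 2 * Mc * β / σ) * ‖x (k + 1) - x k‖)
      = σ * (‖r (k + 2)‖ + ‖r (k + 1)‖ + Lf * ‖x (k + 2) - x (k + 1)‖
          + β * ‖x (k + 2) - x (k + 1)‖ + β * ‖x (k + 1) - x k‖)
        + (2 * Mc * ‖r (k + 1)‖ + Lc * ‖x (k + 2) - x (k + 1)‖ * Mf
          + 2 * Mc * (β * ‖x (k + 1) - x k‖)) := by
    field_simp
    ring
  rw [expand]
  nlinarith [mul_le_mul_of_nonneg_left hdiff hσ.le]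

lemma lyapunov_succ_le (h : IsProximalALSeq f c ρ β x lam r)
    (hreg : SmoothNondegenerateOn f c S Mf Lf Mc σ Lc) (hσ : 0 < σ) (hβ : 0 ≤ β) (hρ : 0 < ρ)
    (hc₁ : 0 < β / 4 - 4 / σ ^ 2 * (Lf + Lc * Mf / σ + β) ^ 2 / ρ)
    (hc₂ : 0 < β / 4 - 4 / σ ^ 2 * (β + 2 * Mc * β / σ) ^ 2 / ρ) {k : ℕ}
    (hx₁ : x (k + 1) ∈ S) (hx₂ : x (k + 2) ∈ S) :
    lyapunov f c ρ β x lam (k + 1) ≤ lyapunov f c ρ β x lam k + residualError ρ σ Mc r k := by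
  set d₂ := ‖x (k + 2) - x (k + 1)‖
  set d₁ := ‖x (k + 1) - x k‖
  have hsq := sq_le_of_le_add_add (by positivity) (h.mul_norm_multiplier_sub_le hreg hσ hβ hx₁ hx₂)
  have hdiv : ‖lam (k + 2) - lam (k + 1)‖ ^ 2 / ρ
      ≤ residualError ρ σ Mc r k + 4 / σ ^ 2 * (Lf + Lc * Mf / σ + β) ^ 2 / ρ * d₂ ^ 2
        + 4 / σ ^ 2 * (β + 2 * Mc * β / σ) ^ 2 / ρ * d₁ ^ 2 := by
    calc ‖lam (k + 2) - lam (k + 1)‖ ^ 2 / ρ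
        = (σ * ‖lam (k + 2) - lam (k + 1)‖) ^ 2 / (ρ * σ ^ 2) := by field_simp
      _ ≤ (2 * (‖r (k + 2)‖ + (1 + 2 * Mc / σ) * ‖r (k + 1)‖) ^ 2
            + 4 * ((Lf + Lc * Mf / σ + β) * d₂) ^ 2 + 4 * ((β + 2 * Mc * β / σ) * d₁) ^ 2)
            / (ρ * σ ^ 2) := by gcongr
      _ = _ := by rw [residualError]; field_simp
  have hAL : AL f c ρ (x (k + 2)) (lam (k + 2))
      = AL f c ρ (x (k + 2)) (lam (k + 1)) + ‖lam (k + 2) - lam (k + 1)‖ ^ 2 / ρ :=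
    h.AL_succ_eq_add_div hρ (k + 1)
  have hdesc : AL f c ρ (x (k + 2)) (lam (k + 1)) + β / 2 * d₂ ^ 2
      ≤ AL f c ρ (x (k + 1)) (lam (k + 1)) := h.descent (k + 1)
  show AL f c ρ (x (k + 2)) (lam (k + 2)) + β / 4 * d₂ ^ 2
    ≤ AL f c ρ (x (k + 1)) (lam (k + 1)) + β / 4 * d₁ ^ 2 + residualError ρ σ Mc r k
  linarith [mul_nonneg hc₁.le (sq_nonneg d₂), mul_nonneg hc₂.le (sq_nonneg d₁)]

lemma norm_sq_multiplier_le (h : IsProximalALSeq f c ρ β x lam r)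
    (hreg : SmoothNondegenerateOn f c S Mf Lf Mc σ Lc) (hσ : 0 < σ) (hβ : 0 ≤ β) {D ρ₀ : ℝ}
    (hdiam : ∀ y ∈ S, ∀ z ∈ S, ‖y - z‖ ≤ D)
    (hρA : (Mf + β * D + 1) ^ 2 / (2 * σ ^ 2) + ρ₀ ≤ ρ) {k : ℕ} (hr : ‖r (k + 1)‖ ≤ 1)
    (hx₀ : x k ∈ S) (hx₁ : x (k + 1) ∈ S) :
    ‖lam (k + 1)‖ ^ 2 ≤ 2 * (ρ - ρ₀) := by
  have hbound : σ * ‖lam (k + 1)‖ ≤ Mf + β * D + 1 := by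
    have := h.mul_norm_multiplier_le hβ (hreg.mul_norm_le_norm_gradc _ hx₁)
    have := hreg.norm_gradient_le _ hx₁
    have := mul_le_mul_of_nonneg_left (hdiam _ hx₁ _ hx₀) hβ
    linarith
  have hsq : (σ * ‖lam (k + 1)‖) ^ 2 ≤ (Mf + β * D + 1) ^ 2 :=
    pow_le_pow_left₀ (by positivity) hbound 2
  rw [← le_sub_iff_add_le, div_le_iff₀ (by positivity)] at hρA
  refine le_of_mul_le_mul_left ?_ (by positivity : 0 < σ ^ 2)
  linarith

lemma mem_and_lyapunov_succ_le (h : IsProximalALSeq f c ρ β x lam r)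
    (hreg : SmoothNondegenerateOn f c S Mf Lf Mc σ Lc) {D ρ₀ α : ℝ}
    (hS : S = {y | f y + ρ₀ / 2 * ‖c y‖ ^ 2 ≤ α}) (hdiam : ∀ y ∈ S, ∀ z ∈ S, ‖y - z‖ ≤ D)
    (hr : ∀ k, 1 ≤ k → ‖r k‖ ≤ 1) (hσ : 0 < σ) (hβ : 0 < β) (hρ : 0 < ρ) (hρ₀ : ρ₀ < ρ)
    (hρA : (Mf + β * D + 1) ^ 2 / (2 * σ ^ 2) + ρ₀ ≤ ρ)
    (hc₁ : 0 < β / 4 - 4 / σ ^ 2 * (Lf + Lc * Mf / σ + β) ^ 2 / ρ)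
    (hc₂ : 0 < β / 4 - 4 / σ ^ 2 * (β + 2 * Mc * β / σ) ^ 2 / ρ) {k : ℕ}
    (hx₀ : x k ∈ S) (hx₁ : x (k + 1) ∈ S) (hP : lyapunov f c ρ β x lam k ≤ α - 1) :
    x (k + 2) ∈ S ∧
      lyapunov f c ρ β x lam (k + 1) ≤ lyapunov f c ρ β x lam k + residualError ρ σ Mc r k := by
  have hlam := h.norm_sq_multiplier_le hreg hσ hβ.le hdiam hρA (hr (k + 1) le_add_self) hx₀ hx₁
  have hAL : AL f c ρ (x (k + 2)) (lam (k + 1)) ≤ α - 1 := by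
    have : AL f c ρ (x (k + 2)) (lam (k + 1)) + β / 2 * ‖x (k + 2) - x (k + 1)‖ ^ 2
        ≤ AL f c ρ (x (k + 1)) (lam (k + 1)) := h.descent (k + 1)
    linarith [AL_le_lyapunov f c ρ x lam hβ.le k, mul_nonneg hβ.le (sq_nonneg ‖x (k + 2) - x (k + 1)‖)]
  have hx₂ : x (k + 2) ∈ S := hS ▸ le_of_AL_le hρ₀ hlam hAL
  exact ⟨hx₂, h.lyapunov_succ_le hreg hσ hβ.le hρ hc₁ hc₂ hx₁ hx₂⟩

lemma initial_bounds (h : IsProximalALSeq f c ρ β x lam r) (hβ : 0 ≤ β) (hρ : 0 < ρ)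
    {ρ₀ L U C₀ α : ℝ} (hρ₁ : 1 ≤ ρ) (hρ₀ : 3 * ρ₀ ≤ ρ)
    (hL : ∀ y, L ≤ f y + ρ₀ / 2 * ‖c y‖ ^ 2) (hU : ∀ y, ‖c y‖ ≤ 1 → f y ≤ U)
    (hc : ‖c (x 0)‖ ^ 2 ≤ min (C₀ / ρ) 1) (hS : S = {y | f y + ρ₀ / 2 * ‖c y‖ ^ 2 ≤ α})
    (hα : α = 7 * U + 7 * C₀ - 6 * L + 13 * ‖lam 0‖ ^ 2 + 2) :
    x 0 ∈ S ∧ x 1 ∈ S ∧ AL f c ρ (x 0) (lam 0) ≤ α - 1 ∧ lyapunov f c ρ β x lam 0 + 1 ≤ α - 1 := by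
  obtain ⟨hcC, hc₁⟩ := le_min_iff.mp hc
  have hρc : ρ * ‖c (x 0)‖ ^ 2 ≤ C₀ := by rwa [le_div_iff₀' hρ] at hcC
  have hc₀ : ‖c (x 0)‖ ^ 2 ≤ C₀ := by nlinarith [sq_nonneg ‖c (x 0)‖]
  have hf₀ : f (x 0) ≤ U := hU _ ((sq_le_one_iff₀ (norm_nonneg _)).mp hc₁)
  have hAL₀ : AL f c ρ (x 0) (lam 0) ≤ U + C₀ + ‖lam 0‖ ^ 2 / 2 := by
    linarith [AL_le f c ρ (x 0) (lam 0)]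
  have hg₀ : f (x 0) + ρ₀ / 2 * ‖c (x 0)‖ ^ 2 ≤ U + C₀ / 6 := by
    nlinarith [mul_le_mul_of_nonneg_right (by linarith : ρ₀ ≤ ρ / 3) (sq_nonneg ‖c (x 0)‖)]
  have hLU : L ≤ U + C₀ / 6 := (hL _).trans hg₀
  have hdesc : AL f c ρ (x 1) (lam 0) + β / 2 * ‖x 1 - x 0‖ ^ 2 ≤ AL f c ρ (x 0) (lam 0) :=
    h.descent 0
  have hΔ := mul_nonneg hβ (sq_nonneg ‖x 1 - x 0‖)
  have hpen : ρ * ‖c (x 1)‖ ^ 2 ≤ 6 * (AL f c ρ (x 1) (lam 0) - L) + 9 * ‖lam 0‖ ^ 2 :=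
    mul_norm_sq_le_AL hρ₁ hρ₀ (hL _)
  have hg₁ := le_AL_add_div (f := f) (c := c) (y := x 1) (l := lam 0) (by linarith : ρ₀ < ρ)
  have hdiv : ‖lam 0‖ ^ 2 / (2 * (ρ - ρ₀)) ≤ 3 / 4 * ‖lam 0‖ ^ 2 := by
    rw [div_le_iff₀ (by linarith)]
    nlinarith [sq_nonneg ‖lam 0‖]
  have hlam := sq_nonneg ‖lam 0‖
  have hC₀ : 0 ≤ C₀ := by nlinarith [sq_nonneg ‖c (x 0)‖]
  subst hS hα
  refine ⟨by simp only [Set.mem_ofPred_eq]; linarith, by simp only [Set.mem_ofPred_eq]; linarith,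
    by linarith, ?_⟩
  rw [lyapunov, h.AL_succ 0]
  linarith

end IsProximalALSeq

theorem stmt14_general
    {n m : ℕ}
    (f : EuclideanSpace ℝ (Fin n) → ℝ) (c : EuclideanSpace ℝ (Fin n) → EuclideanSpace ℝ (Fin m))
    (hf : ContDiff ℝ 2 f) (hc : ContDiff ℝ 2 c)
    (ρ β : ℝ) (hρ : 0 < ρ) (hβ : 0 < β)
    (x : ℕ → EuclideanSpace ℝ (Fin n)) (lam : ℕ → EuclideanSpace ℝ (Fin m)) (r : ℕ → EuclideanSpace ℝ (Fin n))
    (hstat : ∀ k : ℕ,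
      gradient f (x (k+1)) + gradc c (x (k+1)) (lam k)
        + ρ • gradc c (x (k+1)) (c (x (k+1))) + β • (x (k+1) - x k) = r (k+1))
    (hdecr : ∀ k : ℕ,
      AL f c ρ (x (k+1)) (lam k) + β / 2 * ‖x (k+1) - x k‖ ^ 2 ≤ AL f c ρ (x k) (lam k))
    (hmul : ∀ k : ℕ, lam (k+1) = lam k + ρ • c (x (k+1)))
    (R : ℝ)
    (hRsum : ∀ K : ℕ, ∑ k ∈ Finset.range K, ‖r (k+1)‖ ^ 2 ≤ R)
    (hrb : ∀ k : ℕ, 1 ≤ k → ‖r k‖ ≤ 1)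
    (ρ₀ Lbar U C₀ αhat : ℝ)
    (hcompact : ∀ α : ℝ,
      {y : EuclideanSpace ℝ (Fin n) | f y + ρ₀ / 2 * ‖c y‖ ^ 2 ≤ α} = ∅ ∨
        IsCompact {y : EuclideanSpace ℝ (Fin n) | f y + ρ₀ / 2 * ‖c y‖ ^ 2 ≤ α})
    (hLbar : Lbar = ⨅ y : EuclideanSpace ℝ (Fin n), (f y + ρ₀ / 2 * ‖c y‖ ^ 2))
    (hU : ∀ y : EuclideanSpace ℝ (Fin n), ‖c y‖ ≤ 1 → f y ≤ U)
    (hαhat : αhat = 7 * U + 7 * C₀ - 6 * Lbar + 13 * ‖lam 0‖ ^ 2 + 2)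
    (S : Set (EuclideanSpace ℝ (Fin n)))
    (hS : S = {y : EuclideanSpace ℝ (Fin n) | f y + ρ₀ / 2 * ‖c y‖ ^ 2 ≤ αhat})
    (Mf Lf Mc σ Lc DS : ℝ) (hσ : 0 < σ)
    (hMf : ∀ y ∈ S, ‖gradient f y‖ ≤ Mf)
    (hLf : ∀ y ∈ S, ∀ z ∈ S, ‖gradient f y - gradient f z‖ ≤ Lf * ‖y - z‖)
    (hMc : ∀ y ∈ S, ‖fderiv ℝ c y‖ ≤ Mc)
    (hσlb : ∀ y ∈ S, ∀ v : EuclideanSpace ℝ (Fin m), σ * ‖v‖ ≤ ‖gradc c y v‖)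
    (hLc : ∀ y ∈ S, ∀ z ∈ S, ‖fderiv ℝ c y - fderiv ℝ c z‖ ≤ Lc * ‖y - z‖)
    (hDS : DS = Metric.diam S)
    (hρbig : max (max ((Mf + β * DS + 1) ^ 2 / (2 * σ ^ 2) + ρ₀)
        (16 * (Mc ^ 2 + σ ^ 2) * R / σ ^ 4)) (max (3 * ρ₀) 1) ≤ ρ)
    (C1 C2 : ℝ)
    (hC1 : C1 = 4 / σ ^ 2 * (Lf + Lc * Mf / σ + β) ^ 2)
    (hC2 : C2 = 4 / σ ^ 2 * (β + 2 * Mc * β / σ) ^ 2)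
    (hc₁pos : 0 < β / 4 - C1 / ρ) (hc₂pos : 0 < β / 4 - C2 / ρ)
    (hx0 : ‖c (x 0)‖ ^ 2 ≤ min (C₀ / ρ) 1)
 :
    (∀ k : ℕ, 1 ≤ k →
      AL f c ρ (x (k+1)) (lam (k+1)) + β / 4 * ‖x (k+1) - x k‖ ^ 2
        ≤ (AL f c ρ (x 1) (lam 1) + β / 4 * ‖x 1 - x 0‖ ^ 2) + 1) ∧
    (∀ k : ℕ, AL f c ρ (x k) (lam k) ≤ αhat - 1) := by
  subst hC1 hC2
  simp only [max_le_iff] at hρbig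
  obtain ⟨⟨hρA, hρR⟩, hρ₀, hρ₁⟩ := hρbig
  have hP : IsProximalALSeq f c ρ β x lam r := ⟨hstat, hdecr, hmul⟩
  have hreg : SmoothNondegenerateOn f c S Mf Lf Mc σ Lc := ⟨hMf, hLf, hMc, hσlb, hLc⟩
  have hL : ∀ y, Lbar ≤ f y + ρ₀ / 2 * ‖c y‖ ^ 2 := fun y => hLbar ▸ ciInf_le
    (bddBelow_range_of_isCompact_sublevels
      (hf.continuous.add (continuous_const.mul (hc.continuous.norm.pow 2))) hcompact) y
  obtain ⟨hx₀, hx₁, hAL₀, hP₀⟩ :=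
    hP.initial_bounds hβ.le hρ hρ₁ hρ₀ hL hU hx0 hS hαhat
  have hK : IsCompact S :=
    hS ▸ (hcompact αhat).resolve_left (hS ▸ Set.nonempty_iff_ne_empty.mp ⟨_, hx₀⟩)
  have hdiam : ∀ y ∈ S, ∀ z ∈ S, ‖y - z‖ ≤ DS := fun y hy z hz => by
    rw [hDS, ← dist_eq_norm]
    exact Metric.dist_le_diam_of_mem hK.isBounded hy hz
  have herr := sum_residualError_le_one hσ ((norm_nonneg _).trans (hMc _ hx₀)) hρ hRsum hρR
  have hbound := mem_and_le_add_sum_of_step (M := (x · ∈ S)) hx₀ hx₁ hP₀ herr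
    fun k hk hk₁ hPk => hP.mem_and_lyapunov_succ_le hreg hS hdiam hrb hσ hβ hρ (by linarith) hρA
      hc₁pos hc₂pos hk hk₁ hPk
  refine ⟨fun k _ => (hbound k).2.2.trans (add_le_add_right (herr k) _), ?_⟩
  rintro (_ | k)
  · exact hAL₀
  · linarith [AL_le_lyapunov f c ρ x lam hβ.le k, (hbound k).2.2, herr k]

theorem stmt14
    {n m : ℕ}
    (f : EuclideanSpace ℝ (Fin n) → ℝ) (c : EuclideanSpace ℝ (Fin n) → EuclideanSpace ℝ (Fin m))
    (hf : ContDiff ℝ 2 f) (hc : ContDiff ℝ 2 c)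
    (ρ β : ℝ) (hρ : 0 < ρ) (hβ : 0 < β)
    (x : ℕ → EuclideanSpace ℝ (Fin n)) (lam : ℕ → EuclideanSpace ℝ (Fin m)) (r : ℕ → EuclideanSpace ℝ (Fin n))
    (hstat : ∀ k : ℕ,
      gradient f (x (k+1)) + gradc c (x (k+1)) (lam k)
        + ρ • gradc c (x (k+1)) (c (x (k+1))) + β • (x (k+1) - x k) = r (k+1))
    (hdecr : ∀ k : ℕ,
      AL f c ρ (x (k+1)) (lam k) + β / 2 * ‖x (k+1) - x k‖ ^ 2 ≤ AL f c ρ (x k) (lam k))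
    (hmul : ∀ k : ℕ, lam (k+1) = lam k + ρ • c (x (k+1)))
    (R : ℝ)
    (hRsum : ∀ K : ℕ, ∑ k ∈ Finset.range K, ‖r (k+1)‖ ^ 2 ≤ R)
    (hrb : ∀ k : ℕ, 1 ≤ k → ‖r k‖ ≤ 1)
    (ρ₀ Lbar U C₀ αhat : ℝ) (hρ₀ : 0 ≤ ρ₀)
    (hcompact : ∀ α : ℝ,
      {y : EuclideanSpace ℝ (Fin n) | f y + ρ₀ / 2 * ‖c y‖ ^ 2 ≤ α} = ∅ ∨
        IsCompact {y : EuclideanSpace ℝ (Fin n) | f y + ρ₀ / 2 * ‖c y‖ ^ 2 ≤ α})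
    (hLbar : Lbar = ⨅ y : EuclideanSpace ℝ (Fin n), (f y + ρ₀ / 2 * ‖c y‖ ^ 2))
    (hU : ∀ y : EuclideanSpace ℝ (Fin n), ‖c y‖ ≤ 1 → f y ≤ U)
    (hC₀ : 0 < C₀)
    (hαhat : αhat = 7 * U + 7 * C₀ - 6 * Lbar + 13 * ‖lam 0‖ ^ 2 + 2)
    (S : Set (EuclideanSpace ℝ (Fin n)))
    (hS : S = {y : EuclideanSpace ℝ (Fin n) | f y + ρ₀ / 2 * ‖c y‖ ^ 2 ≤ αhat})
    (Mf Lf Mc σ Lc DS : ℝ) (hσ : 0 < σ)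
    (hMf : ∀ y ∈ S, ‖gradient f y‖ ≤ Mf)
    (hLf : ∀ y ∈ S, ∀ z ∈ S, ‖gradient f y - gradient f z‖ ≤ Lf * ‖y - z‖)
    (hMc : ∀ y ∈ S, ‖fderiv ℝ c y‖ ≤ Mc)
    (hσlb : ∀ y ∈ S, ∀ v : EuclideanSpace ℝ (Fin m), σ * ‖v‖ ≤ ‖gradc c y v‖)
    (hLc : ∀ y ∈ S, ∀ z ∈ S, ‖fderiv ℝ c y - fderiv ℝ c z‖ ≤ Lc * ‖y - z‖)
    (hDS : DS = Metric.diam S)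
    (hρbig : max (max ((Mf + β * DS + 1) ^ 2 / (2 * σ ^ 2) + ρ₀)
        (16 * (Mc ^ 2 + σ ^ 2) * R / σ ^ 4)) (max (3 * ρ₀) 1) ≤ ρ)
    (C1 C2 : ℝ)
    (hC1 : C1 = 4 / σ ^ 2 * (Lf + Lc * Mf / σ + β) ^ 2)
    (hC2 : C2 = 4 / σ ^ 2 * (β + 2 * Mc * β / σ) ^ 2)
    (hc₁pos : 0 < β / 4 - C1 / ρ) (hc₂pos : 0 < β / 4 - C2 / ρ)
    (hx0 : ‖c (x 0)‖ ^ 2 ≤ min (C₀ / ρ) 1)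
 :
    (∀ k : ℕ, 1 ≤ k →
      AL f c ρ (x (k+1)) (lam (k+1)) + β / 4 * ‖x (k+1) - x k‖ ^ 2
        ≤ (AL f c ρ (x 1) (lam 1) + β / 4 * ‖x 1 - x 0‖ ^ 2) + 1) ∧
    (∀ k : ℕ, AL f c ρ (x k) (lam k) ≤ αhat - 1) :=
  stmt14_general f c hf hc ρ β hρ hβ x lam r hstat hdecr hmul R hRsum hrb ρ₀ Lbar U C₀ αhat hcompact
    hLbar hU hαhat S hS Mf Lf Mc σ Lc DS hσ hMf hLf hMc hσlb hLc hDS hρbig C1 C2 hC1 hC2 hc₁pos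
    hc₂pos hx0
end

section
/- Under the hypotheses of the boundedness lemma for Proximal AL (in particular ρ ≥ max{3ρ₀, 1}, f(x₀) ≤ Ū, and ‖c(x₀)‖² ≤ min{C₀/ρ, 1}), the first Lyapunov value satisfies P₁ = L_ρ(x₁, λ₁) + (β/4)‖x₁ − x₀‖² ≤ 7Ū + 7C₀ − 6L̄ + 13‖λ₀‖², and the initial augmented Lagrangian satisfies L_ρ(x₀, λ₀) ≤ Ū + ‖λ₀‖²/(2ρ) + C₀. -/
open Filter Topology

/-!
The descent inequality of the first step gives `L_ρ(x₁, λ₀) + (β/2)‖x₁ - x₀‖² ≤ L_ρ(x₀, λ₀)`,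
and the smallness of `c(x₀)` bounds `L_ρ(x₀, λ₀) ≤ Ū + ‖λ₀‖²/(2ρ) + C₀`. Conversely, since
`ρ ≥ 3ρ₀`, Young's inequality and `L̄ ≤ f + (ρ₀/2)‖c‖²` bound `L_ρ(x₁, λ₀)` from below by
`L̄ - 3‖λ₀‖²/(2ρ) + (ρ/6)‖c(x₁)‖²`, which controls `ρ‖c(x₁)‖²`. The multiplier update adds exactly
`ρ‖c(x₁)‖²` to the augmented Lagrangian, and `ρ ≥ 1` turns `‖λ₀‖²/ρ` into `‖λ₀‖²`.
-/

theorem bddBelow_range_of_isCompact_sublevel {X : Type*} [TopologicalSpace X] [T2Space X]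
    {g : X → ℝ} (hS : ∀ a, IsCompact {y | g y ≤ a}) : BddBelow (Set.range g) := by
  by_contra hunbdd
  have hne (k : ℕ) : {y | g y ≤ -k}.Nonempty := by
    obtain ⟨_, ⟨y, rfl⟩, hy⟩ := not_bddBelow_iff.mp hunbdd (-k)
    exact ⟨y, hy.le⟩
  have hanti (k : ℕ) : {y | g y ≤ -(k + 1 : ℕ)} ⊆ {y | g y ≤ -k} :=
    fun y (hy : g y ≤ -(k + 1 : ℕ)) => show g y ≤ -k by push_cast at hy; linarith
  -- Cantor's intersection theorem yields a point lying in every sublevel set.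
  obtain ⟨y, hy⟩ := IsCompact.nonempty_iInter_of_sequence_nonempty_isCompact_isClosed _
    hanti hne (hS _) (fun k => (hS _).isClosed)
  obtain ⟨k, hk⟩ := exists_nat_gt (-g y)
  have hyk : g y ≤ -k := Set.mem_iInter.mp hy k
  linarith

theorem abs_real_inner_le_div_add_mul {F : Type*} [SeminormedAddCommGroup F]
    [InnerProductSpace ℝ F] (u v : F) {ε : ℝ} (hε : 0 < ε) :
    |inner ℝ u v| ≤ ‖u‖ ^ 2 / (2 * ε) + ε / 2 * ‖v‖ ^ 2 := by
  have hyoung : ‖u‖ * ‖v‖ ≤ ‖u‖ ^ 2 / (2 * ε) + ε / 2 * ‖v‖ ^ 2 := by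
    have hsq : 0 ≤ (‖u‖ - ε * ‖v‖) ^ 2 / (2 * ε) := by positivity
    have hexpand : (‖u‖ - ε * ‖v‖) ^ 2 / (2 * ε)
        = ‖u‖ ^ 2 / (2 * ε) + ε / 2 * ‖v‖ ^ 2 - ‖u‖ * ‖v‖ := by
      field_simp
      ring
    linarith
  exact (abs_real_inner_le_norm u v).trans hyoung

section AugmentedLagrangian

variable {n m : ℕ} (f : EuclideanSpace ℝ (Fin n) → ℝ)
  (c : EuclideanSpace ℝ (Fin n) → EuclideanSpace ℝ (Fin m))

theorem AL_add_smul_s15 (ρ : ℝ) (x : EuclideanSpace ℝ (Fin n)) (lam : EuclideanSpace ℝ (Fin m)) :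
    AL f c ρ x (lam + ρ • c x) = AL f c ρ x lam + ρ * ‖c x‖ ^ 2 := by
  simp only [AL, inner_add_left, real_inner_smul_left, real_inner_self_eq_norm_sq]
  ring

theorem AL_le_of_le_of_mul_norm_sq_le {ρ U C₀ : ℝ} (hρ : 0 < ρ) {x : EuclideanSpace ℝ (Fin n)}
    (lam : EuclideanSpace ℝ (Fin m)) (hfx : f x ≤ U) (hcx : ρ * ‖c x‖ ^ 2 ≤ C₀) :
    AL f c ρ x lam ≤ U + ‖lam‖ ^ 2 / (2 * ρ) + C₀ := by
  have hinner := (le_abs_self _).trans (abs_real_inner_le_div_add_mul lam (c x) hρ)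
  unfold AL
  linarith

theorem le_AL_of_le_add_mul_norm_sq {ρ ρ₀ L : ℝ} (hρ : 0 < ρ) (hρ₀ : 3 * ρ₀ ≤ ρ)
    {x : EuclideanSpace ℝ (Fin n)}
    (lam : EuclideanSpace ℝ (Fin m)) (hL : L ≤ f x + ρ₀ / 2 * ‖c x‖ ^ 2) :
    L - 3 * (‖lam‖ ^ 2 / (2 * ρ)) + ρ / 6 * ‖c x‖ ^ 2 ≤ AL f c ρ x lam := by
  have hinner := neg_abs_le (inner ℝ lam (c x)) |>.trans' <| neg_le_neg <|
    abs_real_inner_le_div_add_mul lam (c x) (by positivity : 0 < ρ / 3)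
  have hyoung : ‖lam‖ ^ 2 / (2 * (ρ / 3)) = 3 * (‖lam‖ ^ 2 / (2 * ρ)) := by
    field_simp
  have hpenalty : ρ₀ / 2 * ‖c x‖ ^ 2 ≤ ρ / 6 * ‖c x‖ ^ 2 :=
    mul_le_mul_of_nonneg_right (by linarith) (sq_nonneg _)
  unfold AL
  linarith

end AugmentedLagrangian

theorem stmt15_general
    {n m : ℕ}
    (f : EuclideanSpace ℝ (Fin n) → ℝ) (c : EuclideanSpace ℝ (Fin n) → EuclideanSpace ℝ (Fin m))
    (ρ β : ℝ) (hβ : 0 < β)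
    (x : ℕ → EuclideanSpace ℝ (Fin n)) (lam : ℕ → EuclideanSpace ℝ (Fin m))
    (hdecr : ∀ k : ℕ,
      AL f c ρ (x (k+1)) (lam k) + β / 2 * ‖x (k+1) - x k‖ ^ 2 ≤ AL f c ρ (x k) (lam k))
    (hmul : ∀ k : ℕ, lam (k+1) = lam k + ρ • c (x (k+1)))
    (ρ₀ Lbar U C₀ : ℝ)
    (hcompact : ∀ α : ℝ,
      {y : EuclideanSpace ℝ (Fin n) | f y + ρ₀ / 2 * ‖c y‖ ^ 2 ≤ α} = ∅ ∨
        IsCompact {y : EuclideanSpace ℝ (Fin n) | f y + ρ₀ / 2 * ‖c y‖ ^ 2 ≤ α})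
    (hLbar : Lbar = ⨅ y : EuclideanSpace ℝ (Fin n), (f y + ρ₀ / 2 * ‖c y‖ ^ 2))
    (hU : ∀ y : EuclideanSpace ℝ (Fin n), ‖c y‖ ≤ 1 → f y ≤ U)
    (hρbig : max (3 * ρ₀) 1 ≤ ρ)
    (hx0 : ‖c (x 0)‖ ^ 2 ≤ min (C₀ / ρ) 1) :
    AL f c ρ (x 1) (lam 1) + β / 4 * ‖x 1 - x 0‖ ^ 2
      ≤ 7 * U + 7 * C₀ - 6 * Lbar + 13 * ‖lam 0‖ ^ 2 ∧
    AL f c ρ (x 0) (lam 0) ≤ U + ‖lam 0‖ ^ 2 / (2 * ρ) + C₀ := by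
  obtain ⟨hρ₀, hρ1⟩ := max_le_iff.mp hρbig
  have hρ : 0 < ρ := one_pos.trans_le hρ1
  obtain ⟨hcx0C, hcx0⟩ := le_min_iff.mp hx0
  have hAL0 : AL f c ρ (x 0) (lam 0) ≤ U + ‖lam 0‖ ^ 2 / (2 * ρ) + C₀ :=
    AL_le_of_le_of_mul_norm_sq_le f c hρ (lam 0)
      (hU _ (sq_le_one_iff₀ (norm_nonneg _) |>.mp hcx0))
      (by rwa [le_div_iff₀ hρ, mul_comm] at hcx0C)
  have hLbar_le : Lbar ≤ f (x 1) + ρ₀ / 2 * ‖c (x 1)‖ ^ 2 := by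
    have hS (a : ℝ) := (hcompact a).elim (fun h => h ▸ isCompact_empty) id
    exact hLbar ▸ ciInf_le (bddBelow_range_of_isCompact_sublevel hS) (x 1)
  have hAL1 := le_AL_of_le_add_mul_norm_sq f c hρ hρ₀ (lam 0) hLbar_le
  have hlam : ‖lam 0‖ ^ 2 / (2 * ρ) ≤ ‖lam 0‖ ^ 2 / 2 := by
    gcongr
    linarith
  have hstep : β / 4 * ‖x 1 - x 0‖ ^ 2 ≤ β / 2 * ‖x 1 - x 0‖ ^ 2 := by
    gcongr
    norm_num
  refine ⟨?_, hAL0⟩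
  rw [hmul 0, AL_add_smul_s15]
  have hdescent : AL f c ρ (x 1) (lam 0) + β / 2 * ‖x 1 - x 0‖ ^ 2 ≤ AL f c ρ (x 0) (lam 0) :=
    hdecr 0
  have hfeas : ρ * ‖c (x 1)‖ ^ 2 ≤ 6 * (U + C₀ - Lbar) + 24 * (‖lam 0‖ ^ 2 / (2 * ρ)) := by
    linarith
  linarith [sq_nonneg ‖lam 0‖]

theorem stmt15
    {n m : ℕ}
    (f : EuclideanSpace ℝ (Fin n) → ℝ) (c : EuclideanSpace ℝ (Fin n) → EuclideanSpace ℝ (Fin m))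
    (hf : ContDiff ℝ 2 f) (hc : ContDiff ℝ 2 c)
    (ρ β : ℝ) (hρ : 0 < ρ) (hβ : 0 < β)
    (x : ℕ → EuclideanSpace ℝ (Fin n)) (lam : ℕ → EuclideanSpace ℝ (Fin m)) (r : ℕ → EuclideanSpace ℝ (Fin n))
    (hstat : ∀ k : ℕ,
      gradient f (x (k+1)) + gradc c (x (k+1)) (lam k)
        + ρ • gradc c (x (k+1)) (c (x (k+1))) + β • (x (k+1) - x k) = r (k+1))
    (hdecr : ∀ k : ℕ,
      AL f c ρ (x (k+1)) (lam k) + β / 2 * ‖x (k+1) - x k‖ ^ 2 ≤ AL f c ρ (x k) (lam k))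
    (hmul : ∀ k : ℕ, lam (k+1) = lam k + ρ • c (x (k+1)))
    (ρ₀ Lbar U C₀ : ℝ) (hρ₀ : 0 ≤ ρ₀)
    (hcompact : ∀ α : ℝ,
      {y : EuclideanSpace ℝ (Fin n) | f y + ρ₀ / 2 * ‖c y‖ ^ 2 ≤ α} = ∅ ∨
        IsCompact {y : EuclideanSpace ℝ (Fin n) | f y + ρ₀ / 2 * ‖c y‖ ^ 2 ≤ α})
    (hLbar : Lbar = ⨅ y : EuclideanSpace ℝ (Fin n), (f y + ρ₀ / 2 * ‖c y‖ ^ 2))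
    (hU : ∀ y : EuclideanSpace ℝ (Fin n), ‖c y‖ ≤ 1 → f y ≤ U)
    (hC₀ : 0 < C₀)
    (hρbig : max (3 * ρ₀) 1 ≤ ρ)
    (hx0 : ‖c (x 0)‖ ^ 2 ≤ min (C₀ / ρ) 1) :
    AL f c ρ (x 1) (lam 1) + β / 4 * ‖x 1 - x 0‖ ^ 2
      ≤ 7 * U + 7 * C₀ - 6 * Lbar + 13 * ‖lam 0‖ ^ 2 ∧
    AL f c ρ (x 0) (lam 0) ≤ U + ‖lam 0‖ ^ 2 / (2 * ρ) + C₀ :=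
  stmt15_general f c ρ β hβ x lam hdecr hmul ρ₀ Lbar U C₀ hcompact hLbar hU hρbig hx0
end
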